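/- arXiv:2508.17698 — 7 statements merged into one kernel-verified Lean document; each statement's English description precedes it below -/
import Mathlib

section
/- Let λ₁, λ₂, μ₁, μ₂ ∈ 𝔻. The 2×2 matrix M_Φ(λ₁,λ₂;μ₁,μ₂) with (i,j)-entry (1−μ_i·conj(μ_j))²/(1−λ_i·conj(λ_j))² is positive semi-definite if and only if ρ(μ₁,μ₂) ≤ ρ(λ₁,λ₂). -/
/-!
The entries of `M_Φ` are the quotients `k(λᵢ,λⱼ) / k(μᵢ,μⱼ)` of Bergman kernel values. A Hermitian
`2 × 2` matrix with positive diagonal is positive semidefinite iff its determinant is nonnegative,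
which here reads `|k(λ₁,λ₂)|² / (k(λ₁,λ₁) k(λ₂,λ₂)) ≤ |k(μ₁,μ₂)|² / (k(μ₁,μ₁) k(μ₂,μ₂))`.
By the identity `|1 - μ̄λ|² - |λ - μ|² = (1 - |λ|²)(1 - |μ|²)` these normalized kernels are
`1 - ρ²`, so the condition is `ρ(μ₁,μ₂) ≤ ρ(λ₁,λ₂)`.
-/

open Complex ComplexConjugate ComplexOrder

/-- The distance on the unit disk induced by the Bergman kernel:
`ρ(λ,μ) = sqrt(2p² − p⁴)` where `p = |(λ−μ)/(1−conj(μ)·λ)|`. -/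
noncomputable def rho (l m : ℂ) : ℝ :=
  Real.sqrt (2 * ‖(l - m) / (1 - conj m * l)‖ ^ 2
    - ‖(l - m) / (1 - conj m * l)‖ ^ 4)

open Matrix

theorem Matrix.posSemidef_fin_two_iff {𝕜 : Type*} [RCLike 𝕜] {a : ℝ} (ha : 0 < a) (b : 𝕜)
    (d : ℝ) : !![(a : 𝕜), b; star b, (d : 𝕜)].PosSemidef ↔ ‖b‖ ^ 2 ≤ a * d := by
  constructor
  · intro h
    have hdet := h.det_nonneg
    rw [det_fin_two_of, RCLike.star_def, RCLike.mul_conj] at hdet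
    exact_mod_cast sub_nonneg.mp hdet
  · intro h
    -- Schur complement of the entry `a`.
    have hdecomp : !![(a : 𝕜), b; star b, (d : 𝕜)] =
        a⁻¹ • vecMulVec ![(a : 𝕜), star b] (star ![(a : 𝕜), star b])
          + diagonal ![0, ((d - ‖b‖ ^ 2 / a : ℝ) : 𝕜)] := by
      have ha' : (a : 𝕜) ≠ 0 := by exact_mod_cast ha.ne'
      rw [eta_fin_two (_ + _)]
      simp only [Matrix.add_apply, Matrix.smul_apply, vecMulVec_apply, diagonal_apply,
        RCLike.real_smul_eq_coe_mul]
      simp [RCLike.algebraMap_eq_ofReal]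
      refine ⟨⟨?_, ?_⟩, ?_, ?_⟩ <;> field_simp
      rw [RCLike.conj_mul]
      ring
    have hschur : 0 ≤ d - ‖b‖ ^ 2 / a := by
      rw [sub_nonneg, div_le_iff₀ ha]
      linarith
    rw [hdecomp]
    refine ((posSemidef_vecMulVec_self_star _).smul (inv_nonneg.2 ha.le)).add (.diagonal ?_)
    intro i
    fin_cases i
    · simp
    · exact RCLike.ofReal_nonneg.2 hschur

theorem one_sub_norm_sq_pos {E : Type*} [SeminormedAddGroup E] {z : E} (hz : ‖z‖ < 1) :
    0 < 1 - ‖z‖ ^ 2 :=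
  sub_pos.2 (pow_lt_one₀ (norm_nonneg z) hz two_ne_zero)

namespace Complex

theorem norm_one_sub_conj_mul_sq_sub_norm_sub_sq (u v : ℂ) :
    ‖1 - conj v * u‖ ^ 2 - ‖u - v‖ ^ 2 = (1 - ‖u‖ ^ 2) * (1 - ‖v‖ ^ 2) := by
  simp only [Complex.sq_norm, normSq_apply, sub_re, sub_im, mul_re, mul_im, conj_re, conj_im,
    one_re, one_im]
  ring

theorem one_sub_conj_mul_ne_zero {u v : ℂ} (hu : ‖u‖ < 1) (hv : ‖v‖ < 1) :
    1 - conj v * u ≠ 0 := by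
  have hlt : ‖conj v * u‖ < 1 := by
    rw [norm_mul, norm_conj]
    exact mul_lt_one_of_nonneg_of_lt_one_left (norm_nonneg v) hv hu.le
  exact sub_ne_zero.mpr fun h ↦ by simp [← h] at hlt

theorem one_sub_norm_div_one_sub_conj_mul_sq {u v : ℂ} (h : 1 - conj v * u ≠ 0) :
    1 - ‖(u - v) / (1 - conj v * u)‖ ^ 2
      = (1 - ‖u‖ ^ 2) * (1 - ‖v‖ ^ 2) / ‖1 - conj v * u‖ ^ 2 := by
  rw [← norm_one_sub_conj_mul_sq_sub_norm_sub_sq, norm_div, div_pow, sub_div,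
    div_self (by positivity)]

theorem one_sub_mul_conj_self (z : ℂ) : 1 - z * conj z = ((1 - ‖z‖ ^ 2 : ℝ) : ℂ) := by
  rw [mul_conj']
  push_cast
  rfl

end Complex

/-- `|k(u,v)|² / (k(u,u) k(v,v))` for the Bergman kernel `k(z,w) = (1 - conj w * z)⁻²`. -/
noncomputable def normalizedBergmanKernelSq (u v : ℂ) : ℝ :=
  ((1 - ‖u‖ ^ 2) * (1 - ‖v‖ ^ 2) / ‖1 - conj v * u‖ ^ 2) ^ 2

theorem rho_eq_sqrt_one_sub_normalizedBergmanKernelSq {u v : ℂ} (h : 1 - conj v * u ≠ 0) :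
    rho u v = √(1 - normalizedBergmanKernelSq u v) := by
  rw [rho, normalizedBergmanKernelSq, ← one_sub_norm_div_one_sub_conj_mul_sq h]
  ring_nf

theorem normalizedBergmanKernelSq_le_one {u v : ℂ} (hu : ‖u‖ < 1) (hv : ‖v‖ < 1) :
    normalizedBergmanKernelSq u v ≤ 1 := by
  have := (one_sub_norm_sq_pos hu).le
  have := (one_sub_norm_sq_pos hv).le
  refine pow_le_one₀ (by positivity) ?_
  rw [← one_sub_norm_div_one_sub_conj_mul_sq (one_sub_conj_mul_ne_zero hu hv)]
  linarith [sq_nonneg ‖(u - v) / (1 - conj v * u)‖]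

theorem rho_le_rho_iff {u v u' v' : ℂ} (hu : ‖u‖ < 1) (hv : ‖v‖ < 1) (hu' : ‖u'‖ < 1)
    (hv' : ‖v'‖ < 1) :
    rho u v ≤ rho u' v' ↔ normalizedBergmanKernelSq u' v' ≤ normalizedBergmanKernelSq u v := by
  rw [rho_eq_sqrt_one_sub_normalizedBergmanKernelSq (one_sub_conj_mul_ne_zero hu hv),
    rho_eq_sqrt_one_sub_normalizedBergmanKernelSq (one_sub_conj_mul_ne_zero hu' hv'),
    Real.sqrt_le_sqrt_iff (sub_nonneg.2 (normalizedBergmanKernelSq_le_one hu' hv')),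
    sub_le_sub_iff_left]

theorem norm_sq_div_le_iff_normalizedBergmanKernelSq_le {l1 l2 m1 m2 : ℂ} (hl1 : ‖l1‖ < 1)
    (hl2 : ‖l2‖ < 1) (hm1 : ‖m1‖ < 1) (hm2 : ‖m2‖ < 1) :
    ‖(1 - m1 * conj m2) ^ 2 / (1 - l1 * conj l2) ^ 2‖ ^ 2
        ≤ ((1 - ‖m1‖ ^ 2) / (1 - ‖l1‖ ^ 2)) ^ 2 * ((1 - ‖m2‖ ^ 2) / (1 - ‖l2‖ ^ 2)) ^ 2
      ↔ normalizedBergmanKernelSq l1 l2 ≤ normalizedBergmanKernelSq m1 m2 := by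
  have hN {u v : ℂ} (hu : ‖u‖ < 1) (hv : ‖v‖ < 1) : 0 < ‖1 - conj v * u‖ ^ 2 := by
    have := one_sub_conj_mul_ne_zero hu hv
    positivity
  have := one_sub_norm_sq_pos hl1
  have := one_sub_norm_sq_pos hl2
  have := one_sub_norm_sq_pos hm1
  have := one_sub_norm_sq_pos hm2
  rw [normalizedBergmanKernelSq, normalizedBergmanKernelSq, ← mul_pow, div_mul_div_comm,
    norm_div, norm_pow, norm_pow, mul_comm m1, mul_comm l1,
    sq_le_sq₀ (by positivity) (by positivity), sq_le_sq₀ (by positivity) (by positivity),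
    div_le_div_iff₀ (hN hl1 hl2) (by positivity), div_le_div_iff₀ (hN hl1 hl2) (hN hm1 hm2)]
  rw [mul_comm (‖_‖ ^ 2)]

/-- `M_Φ(λ₁,λ₂;μ₁,μ₂)` is positive semi-definite iff `ρ(μ₁,μ₂) ≤ ρ(λ₁,λ₂)`. -/
theorem MPhi_posSemidef_iff_rho_le (l1 l2 m1 m2 : ℂ)
    (hl1 : ‖l1‖ < 1) (hl2 : ‖l2‖ < 1)
    (hm1 : ‖m1‖ < 1) (hm2 : ‖m2‖ < 1) :
    (Matrix.of fun i j : Fin 2 =>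
        (1 - ![m1, m2] i * conj (![m1, m2] j)) ^ 2 /
          (1 - ![l1, l2] i * conj (![l1, l2] j)) ^ 2).PosSemidef
      ↔ rho m1 m2 ≤ rho l1 l2 := by
  have hM : (Matrix.of fun i j : Fin 2 =>
        (1 - ![m1, m2] i * conj (![m1, m2] j)) ^ 2 /
          (1 - ![l1, l2] i * conj (![l1, l2] j)) ^ 2) =
      !![((((1 - ‖m1‖ ^ 2) / (1 - ‖l1‖ ^ 2)) ^ 2 : ℝ) : ℂ),
          (1 - m1 * conj m2) ^ 2 / (1 - l1 * conj l2) ^ 2;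
        star ((1 - m1 * conj m2) ^ 2 / (1 - l1 * conj l2) ^ 2),
          ((((1 - ‖m2‖ ^ 2) / (1 - ‖l2‖ ^ 2)) ^ 2 : ℝ) : ℂ)] := by
    rw [eta_fin_two (Matrix.of _)]
    simp [one_sub_mul_conj_self, div_pow, mul_comm]
  have ha : 0 < ((1 - ‖m1‖ ^ 2) / (1 - ‖l1‖ ^ 2)) ^ 2 := by
    have := one_sub_norm_sq_pos hm1
    have := one_sub_norm_sq_pos hl1
    positivity
  rw [hM, rho_le_rho_iff hm1 hm2 hl1 hl2]
  exact (posSemidef_fin_two_iff ha _ _).trans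
    (norm_sq_div_le_iff_normalizedBergmanKernelSq_le hl1 hl2 hm1 hm2)
end

section
/- Let f be holomorphic on 𝔻. The kernel (z,λ) ↦ (1−f(z)·conj(f(λ)))²/(1−z·conj(λ))² is positive semi-definite on 𝔻×𝔻 if and only if either sup_{λ∈𝔻}|f(λ)| ≤ 1 or inf_{λ∈𝔻}|f(λ)| ≥ 1. In other words, 𝒮_B = 𝒮 ∪ 𝒮^{−1}. -/
/-!
If `|f| ≤ 1` and `f` is holomorphic across the closed disc, the Cauchy formula turns the quadratic
form of the Pick matrix `((1 - f(wᵢ) conj f(wⱼ)) / (1 - wᵢ conj wⱼ))` into `‖S‖² - ‖V‖²` in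
`L²` of the circle, where `S = ∑ xⱼ kⱼ` is a combination of Szegő kernels and `V` is its image under
the adjoint of multiplication by `f`; hence it is nonnegative. A general Schur function is the limit
of its dilations `f (r z)`, and the Schur product theorem passes from the Pick matrix to its
entrywise square. If `|f| ≥ 1`, the Pick matrix of `f` is minus a congruence of that of `1 / f`,
and squaring removes the sign.

Conversely, if `|f|` takes values on both sides of `1`, then `|f (c)| = 1` somewhere by
connectedness. The diagonal entry of the squared kernel at `c` vanishes, so positivity forces its
whole column to vanish: `f (a) conj f (c) = 1`, i.e. `|f (a)| = 1` for every `a`.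
-/

open Complex ComplexConjugate ComplexOrder Metric Real Matrix Filter Topology

lemma one_sub_mul_ne_zero {a b : ℂ} (ha : ‖a‖ < 1) (hb : ‖b‖ ≤ 1) : 1 - a * b ≠ 0 := by
  have : ‖a * b‖ < 1 := by
    rw [norm_mul]; nlinarith [norm_nonneg a, norm_nonneg b]
  intro h
  rw [← sub_eq_zero.mp h, norm_one] at this
  exact lt_irrefl _ this

lemma sphere_zero_one_subset_closure_ball : sphere (0 : ℂ) 1 ⊆ closure (ball 0 1) := by
  rw [closure_ball _ one_ne_zero]
  exact sphere_subset_closedBall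

lemma circleAverage_conj (f : ℂ → ℂ) (c : ℂ) (R : ℝ) :
    circleAverage (fun z ↦ conj (f z)) c R = conj (circleAverage f c R) := by
  simp [circleAverage_def, intervalIntegral.intervalIntegral_conj, Complex.real_smul, map_ofNat]

lemma circleAverage_ofReal (f : ℂ → ℝ) (c : ℂ) (R : ℝ) :
    circleAverage (fun z ↦ (f z : ℂ)) c R = circleAverage f c R := by
  simp [circleAverage_def, intervalIntegral.integral_ofReal, Complex.real_smul]

/-- The hypothesis makes the average of `V conj V - g V conj S` vanish, so averaging the identity
`|S|² - |V|² = |S - g V|² + (1 - |g|²) |V|² - 2 Re (V conj V - g V conj S)` gives the claim. -/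
lemma circleAverage_mul_conj_le {S V g : ℂ → ℂ} {c : ℂ} {R : ℝ}
    (hS : ContinuousOn S (sphere c |R|)) (hV : ContinuousOn V (sphere c |R|))
    (hg : ContinuousOn g (sphere c |R|)) (hg1 : ∀ ζ ∈ sphere c |R|, ‖g ζ‖ ≤ 1)
    (hVS : circleAverage (fun ζ ↦ V ζ * conj (V ζ)) c R =
      circleAverage (fun ζ ↦ g ζ * V ζ * conj (S ζ)) c R) :
    circleAverage (fun ζ ↦ V ζ * conj (V ζ)) c R ≤ circleAverage (fun ζ ↦ S ζ * conj (S ζ)) c R := by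
  have hint {F : ℂ → ℂ} (hF : ContinuousOn F (sphere c |R|)) : CircleIntegrable F c R :=
    hF.circleIntegrable'
  have hVV : conj (circleAverage (fun ζ ↦ V ζ * conj (V ζ)) c R) =
      circleAverage (fun ζ ↦ V ζ * conj (V ζ)) c R := by
    rw [← circleAverage_conj]
    simp only [map_mul, conj_conj, mul_comm]
  have hexpand : (fun ζ ↦ ((normSq (S ζ - g ζ * V ζ) + (1 - normSq (g ζ)) * normSq (V ζ) : ℝ) : ℂ)) =
      fun ζ ↦ S ζ * conj (S ζ) - g ζ * V ζ * conj (S ζ) - conj (g ζ * V ζ * conj (S ζ)) +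
        V ζ * conj (V ζ) := by
    funext ζ
    push_cast
    simp only [← mul_conj, map_sub, map_mul, conj_conj]
    ring
  have hnonneg : 0 ≤ circleAverage
      (fun ζ ↦ ((normSq (S ζ - g ζ * V ζ) + (1 - normSq (g ζ)) * normSq (V ζ) : ℝ) : ℂ)) c R := by
    rw [circleAverage_ofReal, zero_le_real]
    refine circleAverage_nonneg_of_nonneg fun ζ hζ ↦ ?_
    have : normSq (g ζ) ≤ 1 := by
      rw [normSq_eq_norm_sq]; nlinarith [hg1 ζ hζ, norm_nonneg (g ζ)]
    nlinarith [normSq_nonneg (S ζ - g ζ * V ζ), normSq_nonneg (V ζ)]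
  rw [hexpand, circleAverage_fun_add (hint (by fun_prop)) (hint (by fun_prop)),
    circleAverage_fun_sub (hint (by fun_prop)) (hint (by fun_prop)),
    circleAverage_fun_sub (hint (by fun_prop)) (hint (by fun_prop)), circleAverage_conj,
    ← hVS, hVV] at hnonneg
  simpa using hnonneg

noncomputable def szegoKernel (z w : ℂ) : ℂ := (1 - z * conj w)⁻¹

lemma conj_szegoKernel (z w : ℂ) : conj (szegoKernel z w) = szegoKernel w z := by
  simp [szegoKernel, mul_comm]

lemma szegoKernel_eq_div {b ζ : ℂ} (hζ : ‖ζ‖ = 1) : szegoKernel b ζ = ζ / (ζ - b) := by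
  have hζζ : ζ * conj ζ = 1 := by simp [mul_conj, normSq_eq_norm_sq, hζ]
  have hζ0 : ζ ≠ 0 := by rintro rfl; simp at hζ
  rw [show ζ - b = ζ * (1 - b * conj ζ) by linear_combination b * hζζ,
    div_mul_cancel_left₀ hζ0, szegoKernel]

lemma diffContOnCl_szegoKernel_left {a : ℂ} (ha : ‖a‖ < 1) :
    DiffContOnCl ℂ (fun ζ ↦ szegoKernel ζ a) (ball 0 1) := by
  have hne : ∀ ζ ∈ closure (ball (0 : ℂ) 1), 1 - ζ * conj a ≠ 0 := fun ζ hζ ↦ by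
    rw [closure_ball _ one_ne_zero, mem_closedBall_zero_iff] at hζ
    rw [mul_comm]; exact one_sub_mul_ne_zero (by simpa using ha) hζ
  exact ((differentiable_id.mul_const _).const_sub 1).diffContOnCl.inv hne

/-- The reproducing property of the Szegő kernel, from the Cauchy formula for
`ζ ↦ g ζ * szegoKernel ζ a`, since `szegoKernel b ζ = ζ / (ζ - b)` on the circle. -/
lemma circleAverage_mul_szegoKernel {g : ℂ → ℂ} (hg : DiffContOnCl ℂ g (ball 0 1)) {a b : ℂ}
    (ha : ‖a‖ < 1) (hb : ‖b‖ < 1) :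
    circleAverage (fun ζ ↦ g ζ * szegoKernel ζ a * szegoKernel b ζ) 0 1 =
      g b * szegoKernel b a := by
  have h : DiffContOnCl ℂ (fun ζ ↦ szegoKernel ζ a • g ζ) (ball 0 |1|) := by
    rw [abs_one]; exact (diffContOnCl_szegoKernel_left ha).smul hg
  rw [show g b * szegoKernel b a = szegoKernel b a • g b from mul_comm _ _,
    ← h.circleAverage_smul_div (by simpa using hb)]
  refine circleAverage_congr_sphere fun ζ hζ ↦ ?_
  rw [abs_one, mem_sphere_zero_iff_norm] at hζ
  simp only [sub_zero, smul_eq_mul, szegoKernel_eq_div hζ]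
  ring

lemma circleIntegrable_mul_szegoKernel {g : ℂ → ℂ} (hg : DiffContOnCl ℂ g (ball 0 1)) {a b : ℂ}
    (ha : ‖a‖ < 1) (hb : ‖b‖ < 1) :
    CircleIntegrable (fun ζ ↦ g ζ * szegoKernel ζ a * szegoKernel b ζ) 0 1 := by
  have hk (c : ℂ) (hc : ‖c‖ < 1) : ContinuousOn (fun ζ ↦ szegoKernel ζ c) (sphere 0 1) :=
    (diffContOnCl_szegoKernel_left hc).continuousOn.mono sphere_zero_one_subset_closure_ball
  simp_rw [← conj_szegoKernel _ b]
  exact ContinuousOn.circleIntegrable zero_le_one <|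
    ((hg.continuousOn.mono sphere_zero_one_subset_closure_ball).mul (hk a ha)).mul
      (continuous_conj.comp_continuousOn (hk b hb))

lemma continuousOn_sum_szegoKernel {ι : Type*} [Fintype ι] {w : ι → ℂ} (hw : ∀ i, ‖w i‖ < 1)
    (c : ι → ℂ) : ContinuousOn (fun ζ ↦ ∑ j, c j * szegoKernel ζ (w j)) (sphere 0 1) :=
  continuousOn_finsetSum _ fun j _ ↦ ((diffContOnCl_szegoKernel_left (hw j)).continuousOn.mono
    sphere_zero_one_subset_closure_ball).const_smul (c j)

lemma circleAverage_sum_szegoKernel {ι : Type*} [Fintype ι] {g : ℂ → ℂ}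
    (hg : DiffContOnCl ℂ g (ball 0 1)) {w : ι → ℂ} (hw : ∀ i, ‖w i‖ < 1) (c d : ι → ℂ) :
    circleAverage (fun ζ ↦ g ζ * (∑ j, c j * szegoKernel ζ (w j)) *
        conj (∑ i, d i * szegoKernel ζ (w i))) 0 1 =
      ∑ i, ∑ j, conj (d i) * c j * (g (w i) * szegoKernel (w i) (w j)) := by
  have hexpand : (fun ζ ↦ g ζ * (∑ j, c j * szegoKernel ζ (w j)) *
        conj (∑ i, d i * szegoKernel ζ (w i))) = fun ζ ↦
      ∑ i, ∑ j, (conj (d i) * c j) • (g ζ * szegoKernel ζ (w j) * szegoKernel (w i) ζ) := by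
    funext ζ
    simp only [map_sum, map_mul, conj_szegoKernel, Finset.mul_sum, Finset.sum_mul, smul_eq_mul]
    exact Finset.sum_congr rfl fun i _ ↦ Finset.sum_congr rfl fun j _ ↦ by ring
  have hint (i j : ι) : CircleIntegrable
      (fun ζ ↦ (conj (d i) * c j) • (g ζ * szegoKernel ζ (w j) * szegoKernel (w i) ζ)) 0 1 :=
    (circleIntegrable_mul_szegoKernel hg (hw j) (hw i)).const_smul
  have hint_sum (i : ι) : CircleIntegrable
      (fun ζ ↦ ∑ j, (conj (d i) * c j) • (g ζ * szegoKernel ζ (w j) * szegoKernel (w i) ζ)) 0 1 := by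
    simpa only [Finset.sum_fn] using CircleIntegrable.sum _ fun j _ ↦ hint i j
  rw [hexpand, circleAverage_fun_sum fun i _ ↦ hint_sum i]
  refine Finset.sum_congr rfl fun i _ ↦ ?_
  rw [circleAverage_fun_sum fun j _ ↦ hint i j]
  refine Finset.sum_congr rfl fun j _ ↦ ?_
  rw [circleAverage_fun_smul, circleAverage_mul_szegoKernel hg (hw j) (hw i), smul_eq_mul]

lemma Matrix.PosSemidef.apply_eq_zero_of_diag_eq_zero {n 𝕜 : Type*} [Fintype n] [RCLike 𝕜]
    {A : Matrix n n 𝕜} (hA : A.PosSemidef) {i : n} (hi : A i i = 0) (j : n) : A j i = 0 := by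
  classical
  have h := (hA.dotProduct_mulVec_zero_iff (Pi.single i 1)).mp (by simp [hi])
  simpa [mulVec_single_one] using congrFun h j

lemma Matrix.isClosed_setOf_posSemidef {n 𝕜 : Type*} [Fintype n] [RCLike 𝕜] :
    IsClosed {A : Matrix n n 𝕜 | A.PosSemidef} := by
  simp only [posSemidef_iff_dotProduct_mulVec, Set.ofPred_and, Set.ofPred_forall]
  refine .inter (isClosed_eq (by fun_prop) continuous_id) (isClosed_iInter fun x ↦ ?_)
  exact isClosed_le continuous_const (by fun_prop)

lemma Matrix.neg_hadamard_neg {m n α : Type*} [Ring α] (A B : Matrix m n α) :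
    (-A) ⊙ (-B) = A ⊙ B := by
  ext i j
  simp [hadamard_apply]

noncomputable def pickMatrix {ι : Type*} (f : ℂ → ℂ) (w : ι → ℂ) : Matrix ι ι ℂ :=
  of fun i j ↦ (1 - f (w i) * conj (f (w j))) / (1 - w i * conj (w j))

lemma isHermitian_pickMatrix {ι : Type*} (f : ℂ → ℂ) (w : ι → ℂ) : (pickMatrix f w).IsHermitian := by
  ext i j
  simp only [pickMatrix, conjTranspose_apply, of_apply, star_def, map_div₀, map_sub, map_mul,
    map_one, conj_conj]
  ring

lemma pickMatrix_hadamard_self {ι : Type*} (f : ℂ → ℂ) (w : ι → ℂ) :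
    pickMatrix f w ⊙ pickMatrix f w =
      of fun i j ↦ (1 - f (w i) * conj (f (w j))) ^ 2 / (1 - w i * conj (w j)) ^ 2 := by
  ext i j
  simp only [hadamard_apply, pickMatrix, of_apply, sq, div_mul_div_comm]

lemma posSemidef_pickMatrix_of_diffContOnCl {ι : Type*} [Fintype ι] {g : ℂ → ℂ}
    (hg : DiffContOnCl ℂ g (ball 0 1)) (hg1 : ∀ ζ ∈ sphere (0 : ℂ) 1, ‖g ζ‖ ≤ 1)
    {w : ι → ℂ} (hw : ∀ i, ‖w i‖ < 1) : (pickMatrix g w).PosSemidef := by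
  refine posSemidef_iff_dotProduct_mulVec.mpr ⟨isHermitian_pickMatrix g w, fun x ↦ ?_⟩
  set y : ι → ℂ := fun j ↦ conj (g (w j)) * x j
  set S : ℂ → ℂ := fun ζ ↦ ∑ j, x j * szegoKernel ζ (w j)
  set V : ℂ → ℂ := fun ζ ↦ ∑ j, y j * szegoKernel ζ (w j)
  have hone : DiffContOnCl ℂ (fun _ : ℂ ↦ (1 : ℂ)) (ball 0 1) := diffContOnCl_const
  have hSS := circleAverage_sum_szegoKernel hone hw x x
  have hVV := circleAverage_sum_szegoKernel hone hw y y
  have hVS := circleAverage_sum_szegoKernel hg hw y x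
  simp only [one_mul] at hSS hVV
  have hquad : star x ⬝ᵥ (pickMatrix g w *ᵥ x) =
      circleAverage (fun ζ ↦ S ζ * conj (S ζ)) 0 1 - circleAverage (fun ζ ↦ V ζ * conj (V ζ)) 0 1 := by
    rw [hSS, hVV, ← Finset.sum_sub_distrib]
    refine Finset.sum_congr rfl fun i _ ↦ ?_
    rw [mulVec, dotProduct, Finset.mul_sum, ← Finset.sum_sub_distrib]
    refine Finset.sum_congr rfl fun j _ ↦ ?_
    simp only [pickMatrix, of_apply, y, szegoKernel, Pi.star_apply, star_def, map_mul, conj_conj]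
    ring
  rw [hquad, sub_nonneg]
  have hle := circleAverage_mul_conj_le (S := S) (V := V) (g := g) (c := 0) (R := 1)
  simp only [abs_one] at hle
  refine hle (continuousOn_sum_szegoKernel hw x) (continuousOn_sum_szegoKernel hw y)
    (hg.continuousOn.mono sphere_zero_one_subset_closure_ball) hg1 ?_
  rw [hVV, hVS]
  refine Finset.sum_congr rfl fun i _ ↦ Finset.sum_congr rfl fun j _ ↦ ?_
  simp only [y, map_mul, conj_conj]
  ring

lemma posSemidef_pickMatrix {ι : Type*} [Fintype ι] {f : ℂ → ℂ}
    (hf : DifferentiableOn ℂ f (ball 0 1)) (hf1 : ∀ z : ℂ, ‖z‖ < 1 → ‖f z‖ ≤ 1)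
    {w : ι → ℂ} (hw : ∀ i, ‖w i‖ < 1) : (pickMatrix f w).PosSemidef := by
  have hdilate : ∀ r ∈ Set.Ioo (0 : ℝ) 1, (pickMatrix (fun z ↦ f (r * z)) w).PosSemidef := by
    intro r ⟨hr0, hr1⟩
    have hmaps : Set.MapsTo (fun z : ℂ ↦ (r : ℂ) * z) (closedBall 0 1) (ball 0 1) := fun z hz ↦ by
      rw [mem_closedBall_zero_iff] at hz
      rw [mem_ball_zero_iff, norm_mul, norm_real, Real.norm_of_nonneg hr0.le]
      nlinarith [norm_nonneg z]
    refine posSemidef_pickMatrix_of_diffContOnCl ?_ (fun ζ hζ ↦ hf1 _ ?_) hw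
    · rw [← closure_ball _ one_ne_zero] at hmaps
      exact (hf.comp (differentiableOn_id.const_mul _) hmaps).diffContOnCl
    · exact mem_ball_zero_iff.mp (hmaps (sphere_subset_closedBall hζ))
  have hlim : Tendsto (fun r : ℝ ↦ pickMatrix (fun z ↦ f (r * z)) w) (𝓝[<] 1)
      (𝓝 (pickMatrix f w)) := by
    have hfw (i : ι) : Tendsto (fun r : ℝ ↦ f (r * w i)) (𝓝[<] 1) (𝓝 (f (w i))) := by
      have hcont : ContinuousAt f (w i) :=
        hf.continuousOn.continuousAt (isOpen_ball.mem_nhds (mem_ball_zero_iff.mpr (hw i)))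
      have hlin : Tendsto (fun r : ℝ ↦ (r : ℂ) * w i) (𝓝 1) (𝓝 (w i)) := by
        simpa using (continuous_ofReal.mul_const (w i)).tendsto 1
      exact hcont.tendsto.comp (hlin.mono_left nhdsWithin_le_nhds)
    refine tendsto_pi_nhds.2 fun i ↦ tendsto_pi_nhds.2 fun j ↦ ?_
    exact ((hfw i).mul ((continuous_conj.tendsto _).comp (hfw j))).const_sub 1 |>.div_const _
  exact isClosed_setOf_posSemidef.mem_of_tendsto hlim
    (eventually_of_mem (Ioo_mem_nhdsLT zero_lt_one) hdilate)

lemma pickMatrix_eq_neg_diagonal_mul_pickMatrix_inv {ι : Type*} [Fintype ι] [DecidableEq ι]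
    {f : ℂ → ℂ} {w : ι → ℂ} (hf : ∀ i, f (w i) ≠ 0) :
    pickMatrix f w = -(diagonal (fun i ↦ f (w i)) * pickMatrix (fun z ↦ (f z)⁻¹) w *
      (diagonal fun i ↦ f (w i))ᴴ) := by
  ext i j
  have hj : conj (f (w j)) ≠ 0 := (map_ne_zero _).mpr (hf j)
  simp only [diagonal_conjTranspose, mul_diagonal, diagonal_mul, pickMatrix, of_apply,
    Matrix.neg_apply, Pi.star_apply, star_def, map_inv₀]
  field_simp [hf i]
  ring

lemma posSemidef_pickMatrix_hadamard_self_of_one_le_norm {ι : Type*} [Fintype ι] {f : ℂ → ℂ}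
    (hf : DifferentiableOn ℂ f (ball 0 1)) (hf1 : ∀ z : ℂ, ‖z‖ < 1 → 1 ≤ ‖f z‖)
    {w : ι → ℂ} (hw : ∀ i, ‖w i‖ < 1) : (pickMatrix f w ⊙ pickMatrix f w).PosSemidef := by
  classical
  have hf0 (z : ℂ) (hz : ‖z‖ < 1) : f z ≠ 0 := norm_pos_iff.mp (one_pos.trans_le (hf1 z hz))
  have hinv := posSemidef_pickMatrix (f := fun z ↦ (f z)⁻¹)
    (hf.inv fun z hz ↦ hf0 z (mem_ball_zero_iff.mp hz))
    (fun z hz ↦ by simpa using inv_le_one_of_one_le₀ (hf1 z hz)) hw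
  have hD := hinv.mul_mul_conjTranspose_same (diagonal fun i ↦ f (w i))
  rw [pickMatrix_eq_neg_diagonal_mul_pickMatrix_inv fun i ↦ hf0 _ (hw i)]
  simpa only [neg_hadamard_neg] using hD.hadamard hD

lemma norm_eq_one_of_posSemidef_pickMatrix_hadamard_self {f : ℂ → ℂ} {a c : ℂ}
    (H : (pickMatrix f ![c, a] ⊙ pickMatrix f ![c, a]).PosSemidef) (ha : ‖a‖ < 1) (hc : ‖c‖ ≤ 1)
    (hfc : ‖f c‖ = 1) : ‖f a‖ = 1 := by
  have hcc : f c * conj (f c) = 1 := by simp [mul_conj, normSq_eq_norm_sq, hfc]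
  have hac := H.apply_eq_zero_of_diag_eq_zero (i := 0) (by simp [pickMatrix, hcc]) 1
  have hden : 1 - a * conj c ≠ 0 := one_sub_mul_ne_zero ha (by simpa using hc)
  simp only [hadamard_apply, pickMatrix, of_apply, cons_val_one, cons_val_zero, mul_self_eq_zero,
    div_eq_zero_iff, hden, or_false, sub_eq_zero] at hac
  simpa [hfc] using (congrArg norm hac).symm

/-- Characterization of the class 𝒮_B: the kernel
`(z,λ) ↦ (1−f(z)·conj(f(λ)))²/(1−z·conj(λ))²` is positive semi-definite on 𝔻×𝔻
iff `f ∈ 𝒮 ∪ 𝒮⁻¹`. -/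
theorem SB_eq_S_union_Sinv (f : ℂ → ℂ)
    (hf : DifferentiableOn ℂ f {z : ℂ | ‖z‖ < 1}) :
    (∀ (n : ℕ) (x : Fin n → ℂ), (∀ i, ‖x i‖ < 1) →
        (Matrix.of fun i j : Fin n =>
          (1 - f (x i) * conj (f (x j))) ^ 2 /
            (1 - x i * conj (x j)) ^ 2).PosSemidef)
      ↔ ((∀ z : ℂ, ‖z‖ < 1 → ‖f z‖ ≤ 1)
          ∨ (∀ z : ℂ, ‖z‖ < 1 → 1 ≤ ‖f z‖)) := by
  rw [← ball_zero_eq] at hf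
  constructor
  · intro H
    by_contra! h
    obtain ⟨⟨a, ha, hfa⟩, b, hb, hfb⟩ := h
    obtain ⟨c, hc, hfc⟩ := (convex_ball (0 : ℂ) 1).isPreconnected.intermediate_value
      (mem_ball_zero_iff.mpr hb) (mem_ball_zero_iff.mpr ha) hf.continuousOn.norm ⟨hfb.le, hfa.le⟩
    have hca : ∀ i, ‖![c, a] i‖ < 1 := Fin.forall_fin_two.mpr ⟨mem_ball_zero_iff.mp hc, ha⟩
    refine hfa.ne' (norm_eq_one_of_posSemidef_pickMatrix_hadamard_self ?_ ha
      (mem_ball_zero_iff.mp hc).le hfc)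
    simpa only [pickMatrix_hadamard_self] using H 2 ![c, a] hca
  · rintro (h | h) n x hx <;> rw [← pickMatrix_hadamard_self]
    · exact (posSemidef_pickMatrix hf h hx).hadamard (posSemidef_pickMatrix hf h hx)
    · exact posSemidef_pickMatrix_hadamard_self_of_one_le_norm hf h hx
end

section
/- Let a ∈ Ω be nonneutral. For all z, w ∈ Ω_a (i.e. z, w ∈ Ω with ⟨z,a⟩_K ≠ 1 and ⟨w,a⟩_K ≠ 1), one has 1 − ⟨φ_a(z), φ_a(w)⟩_K = (1 − ⟨a,a⟩_K)·(1 − ⟨z,w⟩_K)/((1 − ⟨z,a⟩_K)·(1 − ⟨a,w⟩_K)). In particular, 1 − ⟨φ_a(z), φ_a(z)⟩_K = (1 − ⟨a,a⟩_K)·(1 − ⟨z,z⟩_K)/|1 − ⟨z,a⟩_K|² for all z ∈ Ω_a. -/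
open Complex ComplexConjugate ComplexOrder

/-- The indefinite inner product `⟨z,w⟩_K = z₁·conj(w₁) − z₂·conj(w₂)` on ℂ². -/
noncomputable def Kip (z w : Fin 2 → ℂ) : ℂ :=
  z 0 * conj (w 0) - z 1 * conj (w 1)

/-- The unit ball `Ω = {z : |z₁|² − |z₂|² < 1}` of the Kreĭn space `(ℂ², ⟨·,·⟩_K)`. -/
def Omega : Set (Fin 2 → ℂ) :=
  {z | ‖z 0‖ ^ 2 - ‖z 1‖ ^ 2 < 1}

/-- The birational involution `φ_a(z) = (a − P_a z − s_a Q_a z)/(1 − ⟨z,a⟩_K)`,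
with the convention `φ_0(z) = −z`.  Here `P_a z = (⟨z,a⟩_K/⟨a,a⟩_K)a`,
`Q_a = I − P_a` and `s_a = (1 − ⟨a,a⟩_K)^{1/2}` (note `⟨a,a⟩_K` is real). -/
noncomputable def phiK (a z : Fin 2 → ℂ) : Fin 2 → ℂ :=
  if a = 0 then -z
  else
    (1 - Kip z a)⁻¹ •
      (a - (Kip z a / Kip a a) • a
        - (Real.sqrt (1 - (Kip a a).re) : ℂ) • (z - (Kip z a / Kip a a) • a))

/-!
Write `φ_a(z) = (a − P_a z − s_a Q_a z)/(1 − ⟨z,a⟩_K)`. Since `Q_a z` is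
`K`-orthogonal to `a`, the cross terms vanish and
`⟨a − P_a z − s_a Q_a z, a − P_a w − s_a Q_a w⟩_K
  = ⟨a,a⟩_K − ⟨a,w⟩_K − ⟨z,a⟩_K + ⟨z,a⟩_K⟨a,w⟩_K/⟨a,a⟩_K + s_a² ⟨Q_a z, Q_a w⟩_K`.
Membership `a ∈ Ω` gives `s_a² = 1 − ⟨a,a⟩_K`, after which the identity is pure algebra.
The diagonal case follows from `1 − ⟨a,z⟩_K = conj (1 − ⟨z,a⟩_K)`.
-/

namespace Kip

lemma conj_eq (z w : Fin 2 → ℂ) : conj (Kip z w) = Kip w z := by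
  simp only [Kip, map_sub, map_mul, conj_conj]; ring

lemma smul_left (c : ℂ) (x y : Fin 2 → ℂ) : Kip (c • x) y = c * Kip x y := by
  simp only [Kip, Pi.smul_apply, smul_eq_mul]; ring

lemma smul_right (c : ℂ) (x y : Fin 2 → ℂ) : Kip x (c • y) = conj c * Kip x y := by
  simp only [Kip, Pi.smul_apply, smul_eq_mul, map_mul]; ring

lemma sub_left (x y w : Fin 2 → ℂ) : Kip (x - y) w = Kip x w - Kip y w := by
  simp only [Kip, Pi.sub_apply]; ring

lemma sub_right (x y w : Fin 2 → ℂ) : Kip w (x - y) = Kip w x - Kip w y := by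
  simp only [Kip, Pi.sub_apply, map_sub]; ring

lemma self_eq_ofReal (z : Fin 2 → ℂ) : Kip z z = ((‖z 0‖ ^ 2 - ‖z 1‖ ^ 2 : ℝ) : ℂ) := by
  simp only [Kip, mul_conj', ofReal_sub, ofReal_pow]

lemma one_sub_swap (z a : Fin 2 → ℂ) : 1 - Kip a z = conj (1 - Kip z a) := by
  rw [map_sub, map_one, conj_eq]

lemma one_sub_swap_ne_zero {z a : Fin 2 → ℂ} (h : Kip z a ≠ 1) : 1 - Kip a z ≠ 0 := by
  rw [one_sub_swap z a, map_ne_zero]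
  exact sub_ne_zero.mpr h.symm

lemma one_sub_mul_one_sub_swap (z a : Fin 2 → ℂ) :
    (1 - Kip z a) * (1 - Kip a z) = ((‖1 - Kip z a‖ : ℝ) : ℂ) ^ 2 := by
  rw [one_sub_swap z a, mul_conj']

end Kip

lemma ofReal_sqrt_one_sub_re_Kip_sq {a : Fin 2 → ℂ} (haO : a ∈ Omega) :
    ((Real.sqrt (1 - (Kip a a).re) : ℝ) : ℂ) ^ 2 = 1 - Kip a a := by
  have hre : (Kip a a).re = ‖a 0‖ ^ 2 - ‖a 1‖ ^ 2 := by rw [Kip.self_eq_ofReal, ofReal_re]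
  have hnonneg : 0 ≤ 1 - (Kip a a).re := by rw [hre]; exact (sub_pos.mpr haO).le
  rw [← ofReal_pow, Real.sq_sqrt hnonneg, ofReal_sub, ofReal_one, hre, Kip.self_eq_ofReal]

lemma Kip_phiK {a z w : Fin 2 → ℂ} (ha : Kip a a ≠ 0) (hz : Kip z a ≠ 1) (hw : Kip w a ≠ 1) :
    Kip (phiK a z) (phiK a w)
      = (Kip a a - Kip a w - Kip z a + Kip z a * Kip a w / Kip a a
          + ((Real.sqrt (1 - (Kip a a).re) : ℝ) : ℂ) ^ 2
            * (Kip z w - Kip z a * Kip a w / Kip a a))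
        / ((1 - Kip z a) * (1 - Kip a w)) := by
  have ha0 : a ≠ 0 := by rintro rfl; simp [Kip] at ha
  have hz' : 1 - Kip z a ≠ 0 := sub_ne_zero.mpr hz.symm
  have hw' := Kip.one_sub_swap_ne_zero hw
  simp only [phiK, if_neg ha0, Kip.smul_left, Kip.smul_right, Kip.sub_left, Kip.sub_right,
    map_div₀, map_sub, map_one, map_inv₀, Kip.conj_eq, conj_ofReal]
  field_simp
  ring

lemma one_sub_Kip_phiK_eq {a z w : Fin 2 → ℂ} (haO : a ∈ Omega) (ha : Kip a a ≠ 0)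
    (hz : Kip z a ≠ 1) (hw : Kip w a ≠ 1) :
    1 - Kip (phiK a z) (phiK a w)
      = (1 - Kip a a) * (1 - Kip z w) / ((1 - Kip z a) * (1 - Kip a w)) := by
  have hz' : 1 - Kip z a ≠ 0 := sub_ne_zero.mpr hz.symm
  have hw' := Kip.one_sub_swap_ne_zero hw
  rw [Kip_phiK ha hz hw, ofReal_sqrt_one_sub_re_Kip_sq haO]
  field_simp
  ring

/-- The fundamental identity
`1 − ⟨φ_a(z), φ_a(w)⟩_K = (1 − ⟨a,a⟩_K)(1 − ⟨z,w⟩_K)/((1 − ⟨z,a⟩_K)(1 − ⟨a,w⟩_K))`,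
and its diagonal special case. -/
theorem one_sub_Kip_phiK (a : Fin 2 → ℂ) (haO : a ∈ Omega) (ha : Kip a a ≠ 0) :
    (∀ z w : Fin 2 → ℂ, z ∈ Omega → w ∈ Omega → Kip z a ≠ 1 → Kip w a ≠ 1 →
      1 - Kip (phiK a z) (phiK a w)
        = (1 - Kip a a) * (1 - Kip z w) / ((1 - Kip z a) * (1 - Kip a w)))
    ∧ (∀ z : Fin 2 → ℂ, z ∈ Omega → Kip z a ≠ 1 →
      1 - Kip (phiK a z) (phiK a z)
        = (1 - Kip a a) * (1 - Kip z z) / (((‖1 - Kip z a‖ : ℝ) : ℂ) ^ 2)) := by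
  refine ⟨fun z w _ _ hz hw => one_sub_Kip_phiK_eq haO ha hz hw, fun z _ hz => ?_⟩
  rw [one_sub_Kip_phiK_eq haO ha hz hz, Kip.one_sub_mul_one_sub_swap]
end

section
/- Let a ∈ Ω be nonneutral. For all z, w ∈ Ω_a (i.e. z, w ∈ Ω with ⟨z,a⟩_K ≠ 1 and ⟨w,a⟩_K ≠ 1), one has 1 − ⟨φ_a(z), w⟩_K = ((1 − ⟨a,w⟩_K)/(1 − ⟨z,a⟩_K))·(1 − ⟨z, φ_a(w)⟩_K). -/
open Complex ComplexConjugate ComplexOrder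

/- After clearing the denominator `1 − ⟨z,a⟩_K`, the quantity `(1 − ⟨z,a⟩_K)(1 − ⟨φ_a(z), w⟩_K)`
is a Hermitian-symmetric expression in `(z, w)`, because `⟨a,a⟩_K` and `s_a` are real.
Conjugating it and swapping `z` and `w` gives the identity. -/

@[simp]
lemma Kip_smul_left (c : ℂ) (v w : Fin 2 → ℂ) : Kip (c • v) w = c * Kip v w := by
  simp only [Kip, Pi.smul_apply, smul_eq_mul]; ring

@[simp]
lemma Kip_sub_left (u v w : Fin 2 → ℂ) : Kip (u - v) w = Kip u w - Kip v w := by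
  simp only [Kip, Pi.sub_apply]; ring

@[simp]
lemma Kip_neg_left (v w : Fin 2 → ℂ) : Kip (-v) w = -Kip v w := by
  simp only [Kip, Pi.neg_apply]; ring

@[simp]
lemma Kip_zero_right (v : Fin 2 → ℂ) : Kip v 0 = 0 := by
  simp [Kip]

lemma Kip_conj_symm (u v : Fin 2 → ℂ) : conj (Kip u v) = Kip v u := by
  simp only [Kip, map_sub, map_mul, Complex.conj_conj]; ring

lemma mul_Kip_phiK_left {a z : Fin 2 → ℂ} (ha : a ≠ 0) (hz : Kip z a ≠ 1) (w : Fin 2 → ℂ) :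
    (1 - Kip z a) * Kip (phiK a z) w = Kip a w - Kip z a / Kip a a * Kip a w
      - (Real.sqrt (1 - (Kip a a).re) : ℂ) * (Kip z w - Kip z a / Kip a a * Kip a w) := by
  simp only [phiK, if_neg ha, Kip_smul_left, Kip_sub_left, ← mul_assoc,
    mul_inv_cancel₀ (sub_ne_zero.mpr hz.symm), one_mul]

lemma conj_mul_one_sub_Kip_phiK (a : Fin 2 → ℂ) {z w : Fin 2 → ℂ}
    (hz : Kip z a ≠ 1) (hw : Kip w a ≠ 1) :
    conj ((1 - Kip w a) * (1 - Kip (phiK a w) z)) = (1 - Kip z a) * (1 - Kip (phiK a z) w) := by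
  rcases eq_or_ne a 0 with rfl | ha
  · simp [phiK, ← Kip_conj_symm z w]
  have haa : conj (Kip a a) = Kip a a := Kip_conj_symm a a
  rw [mul_one_sub, mul_one_sub, mul_Kip_phiK_left ha hz, mul_Kip_phiK_left ha hw]
  simp only [map_mul, map_sub, map_one, map_div₀, Complex.conj_ofReal, haa, Kip_conj_symm]
  ring

theorem one_sub_Kip_phiK_mixed_general (a : Fin 2 → ℂ)
    (z w : Fin 2 → ℂ)
    (hz : Kip z a ≠ 1) (hw : Kip w a ≠ 1) :
    1 - Kip (phiK a z) w = (1 - Kip a w) / (1 - Kip z a) * (1 - Kip z (phiK a w)) := by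
  have hz' : 1 - Kip z a ≠ 0 := sub_ne_zero.mpr hz.symm
  calc 1 - Kip (phiK a z) w
      = (1 - Kip z a)⁻¹ * ((1 - Kip z a) * (1 - Kip (phiK a z) w)) := by field_simp
    _ = (1 - Kip z a)⁻¹ * conj ((1 - Kip w a) * (1 - Kip (phiK a w) z)) := by
      rw [conj_mul_one_sub_Kip_phiK a hz hw]
    _ = (1 - Kip a w) / (1 - Kip z a) * (1 - Kip z (phiK a w)) := by
      simp only [map_mul, map_sub, map_one, Kip_conj_symm]; ring

/-- `1 − ⟨φ_a(z), w⟩_K = ((1 − ⟨a,w⟩_K)/(1 − ⟨z,a⟩_K))·(1 − ⟨z, φ_a(w)⟩_K)`. -/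
theorem one_sub_Kip_phiK_mixed (a : Fin 2 → ℂ) (haO : a ∈ Omega) (ha : Kip a a ≠ 0)
    (z w : Fin 2 → ℂ) (hzO : z ∈ Omega) (hwO : w ∈ Omega)
    (hz : Kip z a ≠ 1) (hw : Kip w a ≠ 1) :
    1 - Kip (phiK a z) w = (1 - Kip a w) / (1 - Kip z a) * (1 - Kip z (phiK a w)) :=
  one_sub_Kip_phiK_mixed_general a z w hz hw
end

section
/- Let a ∈ Ω be nonneutral. For every z ∈ Ω_a, the point φ_a(z) again belongs to Ω_a, and φ_a(φ_a(z)) = z. In particular, the restriction of φ_a to Ω_a is an involutive bijection of Ω_a onto itself. -/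
open Complex ComplexConjugate ComplexOrder

/-!
Write `A = ⟨a,a⟩_K`, `t = ⟨z,a⟩_K` and `s = s_a`. Then
`φ_a(z) = ((1 - (1 - s) t/A) a - s z)/(1 - t)` lies in the span of `a` and `z`, and
`1 - ⟨φ_a(z),a⟩_K = s²/(1 - t)`, so `φ_a(φ_a(z)) = z` reduces to two scalar identities in which
only `s² = 1 - A` is used. Sesquilinearity of `⟨·,·⟩_K` gives
`|1 - t|² (1 - ⟨φ_a z, φ_a z⟩_K) = (1 - A)(1 - ⟨z,z⟩_K)`, whose right side is positive on `Ω`.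
-/

lemma kip_sub_left (x y w : Fin 2 → ℂ) : Kip (x - y) w = Kip x w - Kip y w := by
  simp only [Kip, Pi.sub_apply]; ring

lemma kip_smul_left (c : ℂ) (z w : Fin 2 → ℂ) : Kip (c • z) w = c * Kip z w := by
  simp only [Kip, Pi.smul_apply, smul_eq_mul]; ring

lemma conj_kip (z w : Fin 2 → ℂ) : conj (Kip z w) = Kip w z := by
  simp only [Kip, map_sub, map_mul, conj_conj]; ring

lemma kip_smul_right (c : ℂ) (z w : Fin 2 → ℂ) : Kip z (c • w) = conj c * Kip z w := by
  rw [← conj_kip, kip_smul_left, map_mul, conj_kip]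

lemma kip_sub_right (z x y : Fin 2 → ℂ) : Kip z (x - y) = Kip z x - Kip z y := by
  rw [← conj_kip, kip_sub_left, map_sub, conj_kip, conj_kip]

lemma kip_self_eq_ofReal_re (z : Fin 2 → ℂ) : Kip z z = ((Kip z z).re : ℂ) :=
  (conj_eq_iff_re.mp (conj_kip z z)).symm

lemma conj_kip_self (z : Fin 2 → ℂ) : conj (Kip z z) = Kip z z := conj_kip z z

lemma mem_Omega_iff {z : Fin 2 → ℂ} : z ∈ Omega ↔ (Kip z z).re < 1 := by
  simp [Omega, Kip, mul_conj, Complex.sq_norm]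

lemma ne_zero_of_kip_self_ne_zero {a : Fin 2 → ℂ} (ha : Kip a a ≠ 0) : a ≠ 0 := by
  rintro rfl; simp [Kip] at ha

section Involution

variable {a z : Fin 2 → ℂ}

noncomputable def sK (a : Fin 2 → ℂ) : ℂ := (Real.sqrt (1 - (Kip a a).re) : ℂ)

lemma sK_sq (haO : a ∈ Omega) : sK a ^ 2 = 1 - Kip a a := by
  rw [sK, ← ofReal_pow, Real.sq_sqrt (by linarith [mem_Omega_iff.mp haO]), ofReal_sub, ofReal_one,
    ← kip_self_eq_ofReal_re]

lemma sK_ne_zero (haO : a ∈ Omega) : sK a ≠ 0 := by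
  rw [sK, ofReal_ne_zero, Real.sqrt_ne_zero']
  linarith [mem_Omega_iff.mp haO]

lemma conj_sK (a : Fin 2 → ℂ) : conj (sK a) = sK a := conj_ofReal _

lemma phiK_eq_of_ne_zero (ha : a ≠ 0) :
    phiK a z = (1 - Kip z a)⁻¹ • ((1 - (1 - sK a) * (Kip z a / Kip a a)) • a - sK a • z) := by
  rw [phiK, if_neg ha, sK]
  congr 1
  module

lemma kip_phiK_left (hA : Kip a a ≠ 0) :
    Kip (phiK a z) a = (Kip a a - Kip z a) / (1 - Kip z a) := by
  rw [phiK_eq_of_ne_zero (ne_zero_of_kip_self_ne_zero hA), kip_smul_left, kip_sub_left,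
    kip_smul_left, kip_smul_left, inv_mul_eq_div]
  congr 1
  field_simp
  ring

lemma kip_phiK_left_ne_one (haO : a ∈ Omega) (hA : Kip a a ≠ 0) (hz : Kip z a ≠ 1) :
    Kip (phiK a z) a ≠ 1 := by
  rw [kip_phiK_left hA, Ne, div_eq_one_iff_eq (sub_ne_zero.mpr hz.symm), sub_left_inj]
  intro h
  simpa [h] using mem_Omega_iff.mp haO

lemma phiK_phiK (haO : a ∈ Omega) (hA : Kip a a ≠ 0) (hz : Kip z a ≠ 1) :
    phiK a (phiK a z) = z := by
  have ha := ne_zero_of_kip_self_ne_zero hA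
  have hu : 1 - Kip z a ≠ 0 := sub_ne_zero.mpr hz.symm
  have hs := sK_ne_zero haO
  have hs2 := sK_sq haO
  rw [phiK_eq_of_ne_zero ha (z := phiK a z), kip_phiK_left hA, phiK_eq_of_ne_zero ha]
  set t := Kip z a
  set A := Kip a a
  have hA1 : 1 - A ≠ 0 := hs2 ▸ pow_ne_zero 2 hs
  have hu' : 1 - (A - t) / (1 - t) = (1 - A) / (1 - t) := by field_simp; ring
  rw [hu', inv_div]
  calc _ = ((1 - t) / (1 - A) * (1 - (1 - sK a) * ((A - t) / (1 - t) / A))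
            - (1 - t) / (1 - A) * sK a * (1 - t)⁻¹ * (1 - (1 - sK a) * (t / A))) • a
          + ((1 - t) / (1 - A) * sK a * (1 - t)⁻¹ * sK a) • z := by module
    _ = (0 : ℂ) • a + (1 : ℂ) • z := by
      congr 2
      · field_simp
        linear_combination -t * hs2
      · field_simp
        linear_combination hs2
    _ = z := by rw [zero_smul, zero_add, one_smul]

lemma one_sub_kip_phiK_self (haO : a ∈ Omega) (hA : Kip a a ≠ 0) (hz : Kip z a ≠ 1) :
    (1 - Kip (phiK a z) (phiK a z)) * normSq (1 - Kip z a) = (1 - Kip a a) * (1 - Kip z z) := by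
  have hu : 1 - Kip z a ≠ 0 := sub_ne_zero.mpr hz.symm
  have hs2 := sK_sq haO
  rw [phiK_eq_of_ne_zero (ne_zero_of_kip_self_ne_zero hA)]
  simp only [kip_smul_left, kip_smul_right, kip_sub_left, kip_sub_right, map_mul, map_sub,
    map_inv₀, map_div₀, map_one, conj_sK, conj_kip_self, ← conj_kip z a, ← mul_conj]
  have hu' : 1 - conj (Kip z a) ≠ 0 := by rwa [← map_one (starRingEnd ℂ), ← map_sub, map_ne_zero]
  field_simp
  linear_combination (Kip z a * conj (Kip z a) - Kip a a * Kip z z) * hs2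

lemma phiK_mem_Omega (haO : a ∈ Omega) (hA : Kip a a ≠ 0) (hzO : z ∈ Omega) (hz : Kip z a ≠ 1) :
    phiK a z ∈ Omega := by
  have key := one_sub_kip_phiK_self haO hA hz
  rw [kip_self_eq_ofReal_re (phiK a z), kip_self_eq_ofReal_re a, kip_self_eq_ofReal_re z] at key
  replace key : (1 - (Kip (phiK a z) (phiK a z)).re) * normSq (1 - Kip z a)
      = (1 - (Kip a a).re) * (1 - (Kip z z).re) := by exact_mod_cast key
  have hu : 0 < normSq (1 - Kip z a) := normSq_pos.mpr (sub_ne_zero.mpr hz.symm)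
  have hpos : 0 < (1 - (Kip a a).re) * (1 - (Kip z z).re) :=
    mul_pos (by linarith [mem_Omega_iff.mp haO]) (by linarith [mem_Omega_iff.mp hzO])
  rw [mem_Omega_iff, ← sub_pos]
  exact (mul_pos_iff_of_pos_right hu).mp (key ▸ hpos)

end Involution

/-- `φ_a` maps `Ω_a` into itself and is an involution there; in particular
`φ_a|_{Ω_a}` is a bijection of `Ω_a` onto itself. -/
theorem phiK_involutive_on_OmegaA (a : Fin 2 → ℂ) (haO : a ∈ Omega) (ha : Kip a a ≠ 0) :
    (∀ z : Fin 2 → ℂ, z ∈ Omega → Kip z a ≠ 1 →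
      phiK a z ∈ Omega ∧ Kip (phiK a z) a ≠ 1 ∧ phiK a (phiK a z) = z)
    ∧ Set.BijOn (phiK a) {z | z ∈ Omega ∧ Kip z a ≠ 1} {z | z ∈ Omega ∧ Kip z a ≠ 1} := by
  have hmaps : Set.MapsTo (phiK a) {z | z ∈ Omega ∧ Kip z a ≠ 1} {z | z ∈ Omega ∧ Kip z a ≠ 1} :=
    fun z ⟨hzO, hz⟩ => ⟨phiK_mem_Omega haO ha hzO hz, kip_phiK_left_ne_one haO ha hz⟩
  have hinv : Set.LeftInvOn (phiK a) (phiK a) {z | z ∈ Omega ∧ Kip z a ≠ 1} :=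
    fun z ⟨_, hz⟩ => phiK_phiK haO ha hz
  exact ⟨fun z hzO hz => ⟨(hmaps ⟨hzO, hz⟩).1, (hmaps ⟨hzO, hz⟩).2, hinv ⟨hzO, hz⟩⟩,
    Set.InvOn.bijOn ⟨hinv, hinv⟩ hmaps hmaps⟩
end

section
/- Let a ∈ Ω be nonneutral and let T be a ♯-unitary 2×2 complex matrix. Then T·a is a nonneutral vector of Ω, and T ∘ φ_a ∘ T^♯ = φ_{T·a}, i.e. T·φ_a(T^♯ z) = φ_{T·a}(z) for every z ∈ ℂ² with ⟨z, T·a⟩_K ≠ 1. -/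
open Complex ComplexConjugate ComplexOrder

/-!
`φ_a` is built from `a`, `⟨·,·⟩_K` and vector-space operations only, so any linear
`⟨·,·⟩_K`-isometry `T` transports it: `T φ_a(u) = φ_{Ta}(Tu)`. A ♯-unitary `T` is such an
isometry with inverse `T^♯`, and substituting `u = T^♯ z` gives the theorem.
-/

open Matrix

noncomputable def sharpAdj (T : Matrix (Fin 2) (Fin 2) ℂ) : Matrix (Fin 2) (Fin 2) ℂ :=
  diagonal ![1, -1] * Tᴴ * diagonal ![1, -1]

lemma Kip_mulVec_left (T : Matrix (Fin 2) (Fin 2) ℂ) (z w : Fin 2 → ℂ) :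
    Kip (T *ᵥ z) w = Kip z (sharpAdj T *ᵥ w) := by
  simp only [sharpAdj, Kip, mulVec, dotProduct, Fin.sum_univ_two, mul_diagonal, diagonal_mul,
    conjTranspose_apply, RCLike.star_def, map_add, map_mul, map_neg, map_one, conj_conj,
    cons_val_zero, cons_val_one, cons_val_fin_one]
  ring

lemma eq_of_Kip_eq {w w' : Fin 2 → ℂ} (h : ∀ z, Kip z w = Kip z w') : w = w' := by
  funext i
  fin_cases i
  · exact (starRingEnd ℂ).injective (by simpa [Kip] using h ![1, 0])
  · exact (starRingEnd ℂ).injective (by simpa [Kip] using h ![0, 1])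

lemma re_Kip_self (z : Fin 2 → ℂ) : (Kip z z).re = ‖z 0‖ ^ 2 - ‖z 1‖ ^ 2 := by
  simp [Kip, mul_conj, Complex.sq_norm]

section Isometry

variable {T : Matrix (Fin 2) (Fin 2) ℂ}
  (hT : ∀ z w : Fin 2 → ℂ, Kip (T *ᵥ z) (T *ᵥ w) = Kip z w)
include hT

lemma sharpAdj_mul_of_isometry : sharpAdj T * T = 1 := by
  refine ext_iff_mulVec.mpr fun w ↦ eq_of_Kip_eq fun z ↦ ?_
  rw [← mulVec_mulVec, one_mulVec, ← Kip_mulVec_left, hT]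

lemma mulVec_sharpAdj_mulVec_of_isometry (w : Fin 2 → ℂ) : T *ᵥ (sharpAdj T *ᵥ w) = w := by
  rw [mulVec_mulVec, mul_eq_one_comm.mp (sharpAdj_mul_of_isometry hT), one_mulVec]

lemma mulVec_eq_zero_iff_of_isometry {a : Fin 2 → ℂ} : T *ᵥ a = 0 ↔ a = 0 := by
  refine ⟨fun h ↦ ?_, fun h ↦ h ▸ mulVec_zero T⟩
  rw [← one_mulVec a, ← sharpAdj_mul_of_isometry hT, ← mulVec_mulVec, h, mulVec_zero]

lemma mulVec_mem_Omega_of_isometry {a : Fin 2 → ℂ} (ha : a ∈ Omega) : T *ᵥ a ∈ Omega := by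
  change (_ : ℝ) < 1
  rw [← re_Kip_self, hT, re_Kip_self]
  exact ha

lemma mulVec_phiK_of_isometry (a u : Fin 2 → ℂ) :
    T *ᵥ phiK a u = phiK (T *ᵥ a) (T *ᵥ u) := by
  by_cases ha : a = 0
  · simp only [phiK, ha, mulVec_zero, if_true, mulVec_neg]
  · rw [phiK, phiK, if_neg ha, if_neg ((mulVec_eq_zero_iff_of_isometry hT).not.mpr ha),
      hT, hT]
    simp only [mulVec_smul, mulVec_sub]

end Isometry

/-- For a ♯-unitary matrix `T` one has `T φ_a T^♯ = φ_{Ta}`, where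
`T^♯ = J T* J` with `J = diag(1,−1)`. -/
theorem sharp_unitary_conj_phiK (a : Fin 2 → ℂ) (haO : a ∈ Omega) (ha : Kip a a ≠ 0)
    (T : Matrix (Fin 2) (Fin 2) ℂ)
    (hT : ∀ z w : Fin 2 → ℂ, Kip (T.mulVec z) (T.mulVec w) = Kip z w) :
    Kip (T.mulVec a) (T.mulVec a) ≠ 0 ∧ T.mulVec a ∈ Omega ∧
      ∀ z : Fin 2 → ℂ, Kip z (T.mulVec a) ≠ 1 →
        T.mulVec (phiK a ((Matrix.diagonal ![1, -1] * T.conjTranspose * Matrix.diagonal ![1, -1]).mulVec z))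
          = phiK (T.mulVec a) z := by
  refine ⟨hT a a ▸ ha, mulVec_mem_Omega_of_isometry hT haO, fun z _ ↦ ?_⟩
  change T *ᵥ phiK a (sharpAdj T *ᵥ z) = _
  rw [mulVec_phiK_of_isometry hT, mulVec_sharpAdj_mulVec_of_isometry hT]
end

section
/- For all z = (z₁,z₂) and λ = (λ₁,λ₂) in 𝔹₂, the double series defining K₊(z,λ) and K₋(z,λ) converge absolutely, and K₊(z,λ) − K₋(z,λ) = 1/(1 − (z₁·conj(λ₁) − z₂·conj(λ₂))); moreover Σ_{n=0}^∞ (|z₁·conj(λ₁)| + |z₂·conj(λ₂)|)^n < ∞. -/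
open Complex ComplexConjugate ComplexOrder

/-- The open unit ball `𝔹₂ = {(z₁,z₂) : |z₁|² + |z₂|² < 1}` in ℂ². -/
def Ball2 : Set (ℂ × ℂ) :=
  {z | ‖z.1‖ ^ 2 + ‖z.2‖ ^ 2 < 1}

/-- `K₊(z,λ) = Σₙ Σ_{ℓ=0}^{⌊n/2⌋} C(n,2ℓ)(z₁conj λ₁)^{n−2ℓ}(z₂conj λ₂)^{2ℓ}`. -/
noncomputable def Kplus (z l : ℂ × ℂ) : ℂ :=
  ∑' n : ℕ, ∑ k ∈ Finset.range (n / 2 + 1),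
    (n.choose (2 * k) : ℂ) * (z.1 * conj l.1) ^ (n - 2 * k) * (z.2 * conj l.2) ^ (2 * k)

/-- `K₋(z,λ) = Σ_{n≥1} Σ_{ℓ=1}^{⌈n/2⌉} C(n,2ℓ−1)(z₁conj λ₁)^{n−2ℓ+1}(z₂conj λ₂)^{2ℓ−1}`. -/
noncomputable def Kminus (z l : ℂ × ℂ) : ℂ :=
  ∑' n : ℕ, ∑ k ∈ Finset.Icc 1 ((n + 1) / 2),
    (n.choose (2 * k - 1) : ℂ) * (z.1 * conj l.1) ^ (n + 1 - 2 * k) * (z.2 * conj l.2) ^ (2 * k - 1)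

/-!
With `a = z₁ conj λ₁` and `b = z₂ conj λ₂`, the inner sums of `K₊` and `K₋` are the even and odd
parts of the binomial expansion of `(a + b)ⁿ`, so their difference is `(a - b)ⁿ`. On `𝔹₂` we have
`‖a‖ + ‖b‖ < 1` (from `2xy ≤ x² + y²`), and the geometric series `Σ (‖a‖ + ‖b‖)ⁿ` dominates
both parts absolutely; summing `(a - b)ⁿ` gives `1 / (1 - (a - b))`.
-/

open Finset

theorem sum_filter_even_range_succ {M : Type*} [AddCommMonoid M] (n : ℕ) (f : ℕ → M) :
    ∑ j ∈ (range (n + 1)).filter Even, f j = ∑ k ∈ range (n / 2 + 1), f (2 * k) := by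
  refine (sum_nbij' (fun k => 2 * k) (fun j => j / 2) ?_ ?_ ?_ ?_ ?_).symm <;>
    intro x hx <;> simp only [mem_filter, mem_range, Nat.even_iff] at hx ⊢ <;> omega

theorem sum_filter_not_even_range_succ {M : Type*} [AddCommMonoid M] (n : ℕ) (f : ℕ → M) :
    ∑ j ∈ (range (n + 1)).filter (¬Even ·), f j = ∑ k ∈ Icc 1 ((n + 1) / 2), f (2 * k - 1) := by
  refine (sum_nbij' (fun k => 2 * k - 1) (fun j => (j + 1) / 2) ?_ ?_ ?_ ?_ ?_).symm <;>
    intro x hx <;> simp only [mem_filter, mem_range, mem_Icc, Nat.even_iff] at hx ⊢ <;> omega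

section BinomialTerms

variable {R : Type*}

def binomTerm [Semiring R] (a b : R) (n j : ℕ) : R :=
  n.choose j * a ^ (n - j) * b ^ j

def evenBinomTerm [Semiring R] (a b : R) (n k : ℕ) : R :=
  n.choose (2 * k) * a ^ (n - 2 * k) * b ^ (2 * k)

def oddBinomTerm [Semiring R] (a b : R) (n k : ℕ) : R :=
  n.choose (2 * k - 1) * a ^ (n + 1 - 2 * k) * b ^ (2 * k - 1)

theorem sum_evenBinomTerm [Semiring R] {M : Type*} [AddCommMonoid M] (g : R → M)
    (a b : R) (n : ℕ) :
    ∑ k ∈ range (n / 2 + 1), g (evenBinomTerm a b n k)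
      = ∑ j ∈ (range (n + 1)).filter Even, g (binomTerm a b n j) :=
  (sum_filter_even_range_succ n fun j => g (binomTerm a b n j)).symm

theorem sum_oddBinomTerm [Semiring R] {M : Type*} [AddCommMonoid M] (g : R → M)
    (a b : R) (n : ℕ) :
    ∑ k ∈ Icc 1 ((n + 1) / 2), g (oddBinomTerm a b n k)
      = ∑ j ∈ (range (n + 1)).filter (¬Even ·), g (binomTerm a b n j) := by
  rw [sum_filter_not_even_range_succ]
  refine sum_congr rfl fun k hk => ?_
  rw [mem_Icc] at hk
  rw [oddBinomTerm, binomTerm, show n + 1 - 2 * k = n - (2 * k - 1) by omega]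

theorem binomTerm_neg_right [CommRing R] (a b : R) (n j : ℕ) :
    binomTerm a (-b) n j = (-1) ^ j * binomTerm a b n j := by
  rw [binomTerm, binomTerm, neg_pow]
  ring

theorem sum_evenBinomTerm_sub_sum_oddBinomTerm [CommRing R] (a b : R) (n : ℕ) :
    ∑ k ∈ range (n / 2 + 1), evenBinomTerm a b n k
      - ∑ k ∈ Icc 1 ((n + 1) / 2), oddBinomTerm a b n k = (a - b) ^ n := by
  have binomial : (a - b) ^ n = ∑ j ∈ range (n + 1), binomTerm a (-b) n j := by
    rw [sub_eq_add_neg, add_comm, add_pow]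
    exact sum_congr rfl fun j _ => by rw [binomTerm]; ring
  have even_part : ∑ k ∈ range (n / 2 + 1), evenBinomTerm a b n k
      = ∑ j ∈ (range (n + 1)).filter Even, binomTerm a b n j := sum_evenBinomTerm (fun x => x) ..
  have odd_part : ∑ k ∈ Icc 1 ((n + 1) / 2), oddBinomTerm a b n k
      = ∑ j ∈ (range (n + 1)).filter (¬Even ·), binomTerm a b n j :=
    sum_oddBinomTerm (fun x => x) ..
  rw [even_part, odd_part, binomial, ← sum_filter_add_sum_filter_not (range (n + 1)) Even,
    sub_eq_add_neg, ← sum_neg_distrib]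
  congr 1 <;> refine sum_congr rfl fun j hj => ?_ <;> rw [mem_filter] at hj
  · rw [binomTerm_neg_right, hj.2.neg_one_pow, one_mul]
  · rw [binomTerm_neg_right, (Nat.not_even_iff_odd.1 hj.2).neg_one_pow, neg_one_mul]

theorem norm_binomTerm_le [NormedCommRing R] [NormOneClass R] (a b : R) (n j : ℕ) :
    ‖binomTerm a b n j‖ ≤ n.choose j * ‖a‖ ^ (n - j) * ‖b‖ ^ j := by
  have hchoose : ‖(n.choose j : R)‖ ≤ n.choose j := by
    simpa using Nat.norm_cast_le (α := R) (n.choose j)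
  calc ‖binomTerm a b n j‖
      ≤ ‖(n.choose j : R)‖ * ‖a ^ (n - j)‖ * ‖b ^ j‖ := norm_mul₃_le
    _ ≤ n.choose j * ‖a‖ ^ (n - j) * ‖b‖ ^ j := by
      gcongr
      · exact norm_pow_le a _
      · exact norm_pow_le b _

theorem sum_norm_binomTerm_le [NormedCommRing R] [NormOneClass R] (a b : R) {n : ℕ}
    {s : Finset ℕ} (hs : s ⊆ range (n + 1)) :
    ∑ j ∈ s, ‖binomTerm a b n j‖ ≤ (‖a‖ + ‖b‖) ^ n :=
  calc ∑ j ∈ s, ‖binomTerm a b n j‖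
      ≤ ∑ j ∈ range (n + 1), n.choose j * ‖a‖ ^ (n - j) * ‖b‖ ^ j :=
        sum_le_sum_of_subset_of_nonneg hs (fun _ _ _ => by positivity) |>.trans'
          (sum_le_sum fun j _ => norm_binomTerm_le a b n j)
    _ = (‖a‖ + ‖b‖) ^ n := by
      rw [add_comm ‖a‖, add_pow]
      exact sum_congr rfl fun j _ => by ring

theorem summable_sum_norm_evenBinomTerm [NormedCommRing R] [NormOneClass R] {a b : R}
    (h : ‖a‖ + ‖b‖ < 1) :
    Summable fun n => ∑ k ∈ range (n / 2 + 1), ‖evenBinomTerm a b n k‖ :=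
  (summable_geometric_of_lt_one (by positivity) h).of_nonneg_of_le
    (fun _ => sum_nonneg fun _ _ => norm_nonneg _)
    fun n => (sum_evenBinomTerm norm a b n).trans_le (sum_norm_binomTerm_le a b (filter_subset _ _))

theorem summable_sum_norm_oddBinomTerm [NormedCommRing R] [NormOneClass R] {a b : R}
    (h : ‖a‖ + ‖b‖ < 1) :
    Summable fun n => ∑ k ∈ Icc 1 ((n + 1) / 2), ‖oddBinomTerm a b n k‖ :=
  (summable_geometric_of_lt_one (by positivity) h).of_nonneg_of_le
    (fun _ => sum_nonneg fun _ _ => norm_nonneg _)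
    fun n => (sum_oddBinomTerm norm a b n).trans_le (sum_norm_binomTerm_le a b (filter_subset _ _))

theorem tsum_sum_evenBinomTerm_sub_tsum_sum_oddBinomTerm [NormedField R] [CompleteSpace R]
    {a b : R} (h : ‖a‖ + ‖b‖ < 1) :
    ∑' n, ∑ k ∈ range (n / 2 + 1), evenBinomTerm a b n k
      - ∑' n, ∑ k ∈ Icc 1 ((n + 1) / 2), oddBinomTerm a b n k = (1 - (a - b))⁻¹ := by
  have even_summable := (summable_sum_norm_evenBinomTerm h).of_norm_bounded
    fun n => norm_sum_le (range (n / 2 + 1)) (evenBinomTerm a b n)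
  have odd_summable := (summable_sum_norm_oddBinomTerm h).of_norm_bounded
    fun n => norm_sum_le (Icc 1 ((n + 1) / 2)) (oddBinomTerm a b n)
  rw [← even_summable.tsum_sub odd_summable]
  simp_rw [sum_evenBinomTerm_sub_sum_oddBinomTerm]
  exact tsum_geometric_of_norm_lt_one ((norm_sub_le a b).trans_lt h)

end BinomialTerms

theorem norm_mul_conj_add_norm_mul_conj_lt_one {z l : ℂ × ℂ} (hz : z ∈ Ball2)
    (hl : l ∈ Ball2) : ‖z.1 * conj l.1‖ + ‖z.2 * conj l.2‖ < 1 := by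
  rw [Ball2, Set.mem_ofPred_eq] at hz hl
  simp only [norm_mul, RCLike.norm_conj]
  nlinarith [sq_nonneg (‖z.1‖ - ‖l.1‖), sq_nonneg (‖z.2‖ - ‖l.2‖)]

/-- On `𝔹₂`, the series defining `K₊` and `K₋` converge absolutely,
`K₊ − K₋ = 1/(1 − (z₁conj λ₁ − z₂conj λ₂))`, and the geometric majorant
`Σₙ (|z₁conj λ₁| + |z₂conj λ₂|)ⁿ` converges. -/
theorem Kplus_sub_Kminus (z l : ℂ × ℂ) (hz : z ∈ Ball2) (hl : l ∈ Ball2) :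
    Summable (fun n : ℕ => ∑ k ∈ Finset.range (n / 2 + 1),
      ‖(n.choose (2 * k) : ℂ) * (z.1 * conj l.1) ^ (n - 2 * k)
        * (z.2 * conj l.2) ^ (2 * k)‖) ∧
    Summable (fun n : ℕ => ∑ k ∈ Finset.Icc 1 ((n + 1) / 2),
      ‖(n.choose (2 * k - 1) : ℂ) * (z.1 * conj l.1) ^ (n + 1 - 2 * k)
        * (z.2 * conj l.2) ^ (2 * k - 1)‖) ∧
    Kplus z l - Kminus z l = 1 / (1 - (z.1 * conj l.1 - z.2 * conj l.2)) ∧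
    Summable (fun n : ℕ =>
      (‖z.1 * conj l.1‖ + ‖z.2 * conj l.2‖) ^ n) := by
  have h := norm_mul_conj_add_norm_mul_conj_lt_one hz hl
  refine ⟨summable_sum_norm_evenBinomTerm h, summable_sum_norm_oddBinomTerm h, ?_,
    summable_geometric_of_lt_one (by positivity) h⟩
  rw [one_div]
  exact tsum_sum_evenBinomTerm_sub_tsum_sum_oddBinomTerm h
end
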